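/- Let P be a finite poset and G_P its cover-incomparability graph. Suppose the distinct vertices x, u, v, w induce a claw in G_P with center x (x is adjacent to each of u, v, w, and u, v, w are pairwise non-adjacent), and suppose u < v < w in P. Then u << v, v << w, u << w, x is incomparable to v, either u ⋖ x or x is incomparable to u, and either x ⋖ w or x is incomparable to w. Here a << b means a < b and b does not cover a. -/

import Mathlib

/-- The cover-incomparability graph of a poset: distinct `u, v` are adjacent
iff `u ⋖ v`, or `v ⋖ u`, or `u` and `v` are incomparable. -/
def ciGraph (α : Type*) [PartialOrder α] : SimpleGraph α where
  Adj u v := u ⋖ v ∨ v ⋖ u ∨ (¬ u ≤ v ∧ ¬ v ≤ u)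
  symm := by
    refine ⟨?_⟩
    intro u v h
    rcases h with h | h | h
    · exact Or.inr (Or.inl h)
    · exact Or.inl h
    · exact Or.inr (Or.inr ⟨h.2, h.1⟩)
  loopless := by
    refine ⟨?_⟩
    intro u h
    rcases h with h | h | h
    · exact absurd h.lt (lt_irrefl u)
    · exact absurd h.lt (lt_irrefl u)
    · exact h.1 le_rfl

/-- `a` and `b` are incomparable. -/
def IncompRel' {α : Type*} [PartialOrder α] (a b : α) : Prop := ¬ a ≤ b ∧ ¬ b ≤ a

/-- `a << b`: `a < b` but `a` is not covered by `b`. -/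
def LtNotCov {α : Type*} [PartialOrder α] (a b : α) : Prop := a < b ∧ ¬ a ⋖ b

/-- If distinct vertices `x, u, v, w` induce a claw with center `x` in the
cover-incomparability graph of a finite poset and `u < v < w`, then `u << v`,
`v << w`, `u << w`, `x` is incomparable to `v`, either `u ⋖ x` or `x` is incomparable
to `u`, and either `x ⋖ w` or `x` is incomparable to `w`. -/
theorem stmt17 (α : Type*) [Fintype α] [PartialOrder α] (x u v w : α)
    (hxu : x ≠ u) (hxv : x ≠ v) (hxw : x ≠ w)
    (huv : u ≠ v) (huw : u ≠ w) (hvw : v ≠ w)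
    (axu : (ciGraph α).Adj x u) (axv : (ciGraph α).Adj x v)
    (axw : (ciGraph α).Adj x w)
    (nuv : ¬ (ciGraph α).Adj u v) (nuw : ¬ (ciGraph α).Adj u w)
    (nvw : ¬ (ciGraph α).Adj v w)
    (hlt1 : u < v) (hlt2 : v < w) :
    LtNotCov u v ∧ LtNotCov v w ∧ LtNotCov u w ∧ IncompRel' x v ∧
      (u ⋖ x ∨ IncompRel' x u) ∧ (x ⋖ w ∨ IncompRel' x w) := by
  have hxvinc : IncompRel' x v := by
    rcases axv with h | h | h
    · exfalso
      rcases axw with h' | h' | h'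
      · exact h'.2 h.lt hlt2
      · exact absurd (h.lt.trans hlt2) h'.lt.asymm
      · exact h'.1 (h.lt.trans hlt2).le
    · exfalso
      rcases axu with h' | h' | h'
      · exact absurd (h.lt.trans h'.lt) hlt1.asymm
      · exact h'.2 hlt1 h.lt
      · exact h'.2 (hlt1.trans h.lt).le
    · exact ⟨h.1, h.2⟩
  refine ⟨⟨hlt1, fun hc => nuv (Or.inl hc)⟩, ⟨hlt2, fun hc => nvw (Or.inl hc)⟩,
    ⟨hlt1.trans hlt2, fun hc => nuw (Or.inl hc)⟩, hxvinc, ?_, ?_⟩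
  · rcases axu with h | h | h
    · exact absurd (h.lt.trans hlt1).le hxvinc.1
    · exact Or.inl h
    · exact Or.inr ⟨h.1, h.2⟩
  · rcases axw with h | h | h
    · exact Or.inl h
    · exact absurd (hlt2.trans h.lt).le hxvinc.2
    · exact Or.inr ⟨h.1, h.2⟩
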